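/- arXiv:2504.03152 — 3 statements merged into one kernel-verified Lean document; each statement's English description precedes it below -/
import Mathlib

section
/- Under weak duality P(B) ≥ D(θ*) (where P is the primal objective at any primal point B and θ* is the dual optimum), and L-strong concavity of the dual D with θ* maximizing D over the feasible set Δ, for any feasible dual point θ ∈ Δ and any primal point B one has ‖θ - θ*‖ ≤ √(2(P(B) - D(θ))/L), i.e., the distance to the dual optimum is bounded via the duality gap G(B,θ) = P(B) - D(θ). -/
open scoped RealInnerProductSpace

/-- Under weak duality `P B ≥ D θ*` and `L`-strong concavity of the dual `D`
maximized at `θ* ∈ Δ`, for any feasible dual `θ ∈ Δ` and any primal `B`,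
`‖θ - θ*‖ ≤ √(2 (P B - D θ) / L)`, i.e. the distance to the dual optimum is bounded via the
duality gap `G(B, θ) = P B - D θ`. -/
theorem duality_gap_distance_bound
    {E F : Type*} [NormedAddCommGroup E] [InnerProductSpace ℝ E] [CompleteSpace E]
    (D : E → ℝ) (P : F → ℝ) (L : ℝ) (hL : 0 < L)
    (Δ : Set E) (hΔ : Convex ℝ Δ)
    (θstar : E) (hmem : θstar ∈ Δ)
    (g : E) (hgrad : HasGradientAt D g θstar)
    (hmax : ∀ θ ∈ Δ, D θ ≤ D θstar)
    (hconc : ∀ θ : E, D θ ≤ D θstar + ⟪g, θ - θstar⟫ - L / 2 * ‖θ - θstar‖ ^ 2)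
    (hweak : ∀ B : F, D θstar ≤ P B) :
    ∀ θ ∈ Δ, ∀ B : F, ‖θ - θstar‖ ≤ Real.sqrt (2 * (P B - D θ) / L) := by
  intro θ hθ B
  -- first-order optimality: ⟪g, θ - θstar⟫ ≤ 0
  have hfd : HasFDerivWithinAt D ((InnerProductSpace.toDual ℝ E) g) Δ θstar :=
    hgrad.hasFDerivAt.hasFDerivWithinAt
  have hcone : θ - θstar ∈ posTangentConeAt Δ θstar :=
    sub_mem_posTangentConeAt_of_segment_subset (hΔ.segment_subset hmem hθ)
  have hloc : IsLocalMaxOn D Δ θstar := (isMaxOn_iff.mpr hmax).localize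
  have hinner : ⟪g, θ - θstar⟫ ≤ 0 := by
    have := hloc.hasFDerivWithinAt_nonpos hfd hcone
    simpa using this
  have key : L / 2 * ‖θ - θstar‖ ^ 2 ≤ P B - D θ := by
    have h1 := hconc θ
    have h2 := hweak B
    nlinarith [h1, h2, hinner]
  have h3 : ‖θ - θstar‖ ^ 2 ≤ 2 * (P B - D θ) / L := by
    rw [le_div_iff₀ hL]
    nlinarith
  calc ‖θ - θstar‖ = Real.sqrt (‖θ - θstar‖ ^ 2) := by
        rw [Real.sqrt_sq (norm_nonneg _)]
    _ ≤ Real.sqrt (2 * (P B - D θ) / L) := Real.sqrt_le_sqrt h3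
end

section
/- Safety of the screening test: Suppose the screening certificate holds, i.e., ‖xᵢᵀθ‖₂ + ‖xᵢ‖₂√(2G(B,θ)/L) < λ_{|A*|}, where ‖θ - θ*‖_F ≤ √(2G(B,θ)/L) and the optimality condition guarantees that ‖xᵢᵀθ*‖₂ ≥ λ_{|A*|} for every i with B*_{i,:} ≠ 0 (since λ is non-increasing and λ_{|A*|} = min over the active set). Then B*_{i,:} = 0. -/
open scoped BigOperators

/-- `xᵀθ ∈ ℝ^q`: the row vector of inner products of `x ∈ ℝⁿ` with the columns of
`θ ∈ ℝ^{n×q}`. -/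
noncomputable def rowDot {n q : ℕ} (x : Fin n → ℝ) (θ : Matrix (Fin n) (Fin q) ℝ) :
    Fin q → ℝ :=
  fun j => ∑ i, x i * θ i j

/-- Euclidean norm of a vector. -/
noncomputable def vnorm {m : ℕ} (v : Fin m → ℝ) : ℝ :=
  Real.sqrt (∑ j, v j ^ 2)

/-- Frobenius norm of a matrix. -/
noncomputable def frob {n q : ℕ} (θ : Matrix (Fin n) (Fin q) ℝ) : ℝ :=
  Real.sqrt (∑ i, ∑ j, θ i j ^ 2)


lemma vnorm_nonneg' {m : ℕ} (v : Fin m → ℝ) : 0 ≤ vnorm v := Real.sqrt_nonneg _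

lemma vnorm_eq' {m : ℕ} (v : Fin m → ℝ) :
    vnorm v = ‖(WithLp.equiv 2 (Fin m → ℝ)).symm v‖ := by
  rw [EuclideanSpace.norm_eq]
  simp [vnorm, Real.norm_eq_abs, sq_abs]

lemma vnorm_add_le' {m : ℕ} (u v : Fin m → ℝ) : vnorm (u + v) ≤ vnorm u + vnorm v := by
  simp only [vnorm_eq']
  exact norm_add_le _ _

lemma vnorm_rowDot_le' {n q : ℕ} (x : Fin n → ℝ) (M : Matrix (Fin n) (Fin q) ℝ) :
    vnorm (rowDot x M) ≤ vnorm x * frob M := by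
  rw [vnorm, vnorm, frob, ← Real.sqrt_mul (by positivity)]
  apply Real.sqrt_le_sqrt
  rw [show (∑ i, ∑ j, M i j^2) = ∑ j, ∑ i, M i j^2 from Finset.sum_comm, Finset.mul_sum]
  apply Finset.sum_le_sum
  intro j _
  exact Finset.sum_mul_sq_le_sq_mul_sq Finset.univ x (fun i => M i j)

lemma frob_sub_symm' {n q : ℕ} (A B : Matrix (Fin n) (Fin q) ℝ) :
    frob (A - B) = frob (B - A) := by
  unfold frob
  congr 1
  refine Finset.sum_congr rfl fun i _ => Finset.sum_congr rfl fun j _ => ?_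
  have : (A - B) i j = -((B - A) i j) := by simp [Matrix.sub_apply]
  rw [this, neg_pow]
  simp

/-- **Safety of the screening test.** If the screening certificate
`‖xᵢᵀθ‖₂ + ‖xᵢ‖₂ √(2G/L) < λ_{|A*|}` holds, where `‖θ - θ*‖_F ≤ √(2G/L)` and the
optimality condition guarantees `‖xᵢᵀθ*‖₂ ≥ λ_{|A*|}` for every active row, then
`B*_{i,:} = 0`. -/
theorem screening_test_safe {n q d : ℕ} (G L : ℝ) (hG : 0 ≤ G) (hL : 0 < L)
    (x : Fin d → Fin n → ℝ)
    (θ θstar : Matrix (Fin n) (Fin q) ℝ)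
    (Bstar : Matrix (Fin d) (Fin q) ℝ)
    (lam : ℕ → ℝ)
    (Astar : Finset (Fin d)) (hA : ∀ i, i ∈ Astar ↔ Bstar i ≠ 0)
    (hKKT : ∀ i : Fin d, Bstar i ≠ 0 → lam Astar.card ≤ vnorm (rowDot (x i) θstar))
    (hbound : frob (θ - θstar) ≤ Real.sqrt (2 * G / L))
    (i : Fin d)
    (hcert : vnorm (rowDot (x i) θ) + vnorm (x i) * Real.sqrt (2 * G / L)
        < lam Astar.card) :
    Bstar i = 0 := by
  by_contra h
  have h1 := hKKT i h
  have hdecomp : rowDot (x i) θstar = rowDot (x i) θ + rowDot (x i) (θstar - θ) := by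
    funext j
    simp [rowDot, Matrix.sub_apply, mul_sub, Finset.sum_sub_distrib]
  have h2 : vnorm (rowDot (x i) θstar)
      ≤ vnorm (rowDot (x i) θ) + vnorm (x i) * frob (θstar - θ) := by
    rw [hdecomp]
    exact (vnorm_add_le' _ _).trans (by
      have := vnorm_rowDot_le' (x i) (θstar - θ); linarith)
  rw [frob_sub_symm'] at h2
  have h3 : vnorm (x i) * frob (θ - θstar) ≤ vnorm (x i) * Real.sqrt (2 * G / L) :=
    mul_le_mul_of_nonneg_left hbound (vnorm_nonneg' _)
  linarith
end

section
/- Finite-iteration screening guarantee: Let θᵏ → θ* and G(Bᵏ, θᵏ) → 0 as k → ∞. Fix a feature i with ‖xᵢᵀθ*‖₂ < λ_{|A*|} and xᵢ ≠ 0. Then there exists K₀ ∈ ℕ such that for all k ≥ K₀, ‖xᵢᵀθᵏ‖₂ + ‖xᵢ‖₂√(2G(Bᵏ,θᵏ)/L) < λ_{|A*|}, i.e., feature i is eventually screened out by the test. -/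
open scoped BigOperators

/-- **Finite-iteration screening guarantee.** If `θᵏ → θ*` and `G(Bᵏ,θᵏ) → 0`,
then any feature `i` with `‖xᵢᵀθ*‖₂ < λ_{|A*|}` and `xᵢ ≠ 0` is eventually screened out:
there is `K₀` with `‖xᵢᵀθᵏ‖₂ + ‖xᵢ‖₂ √(2Gᵏ/L) < λ_{|A*|}` for all `k ≥ K₀`. -/
theorem eventually_screened {n q : ℕ} (L : ℝ) (hL : 0 < L)
    (θseq : ℕ → Matrix (Fin n) (Fin q) ℝ) (θstar : Matrix (Fin n) (Fin q) ℝ)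
    (G : ℕ → ℝ) (hG : ∀ k, 0 ≤ G k)
    (hθ : Filter.Tendsto (fun k => frob (θseq k - θstar)) Filter.atTop (nhds 0))
    (hGten : Filter.Tendsto G Filter.atTop (nhds 0))
    (x : Fin n → ℝ) (hx : x ≠ 0)
    (thr : ℝ) (hthr : vnorm (rowDot x θstar) < thr) :
    ∃ K₀ : ℕ, ∀ k ≥ K₀,
      vnorm (rowDot x (θseq k)) + vnorm x * Real.sqrt (2 * G k / L) < thr := by
  -- entrywise convergence
  have hentry : ∀ i j, Filter.Tendsto (fun k => θseq k i j) Filter.atTop (nhds (θstar i j)) := by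
    intro i j
    have hb : ∀ k, ‖θseq k i j - θstar i j‖ ≤ frob (θseq k - θstar) := by
      intro k
      have h1 : (θseq k i j - θstar i j) ^ 2 ≤ ∑ i', ∑ j', (θseq k - θstar) i' j' ^ 2 := by
        have : (θseq k - θstar) i j ^ 2 ≤ ∑ j', (θseq k - θstar) i j' ^ 2 :=
          Finset.single_le_sum (f := fun j' => (θseq k - θstar) i j' ^ 2)
            (fun j' _ => sq_nonneg _) (Finset.mem_univ j)
        refine le_trans ?_ (Finset.single_le_sum (fun i' _ => Finset.sum_nonneg fun j' _ => sq_nonneg _) (Finset.mem_univ i))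
        simpa [Matrix.sub_apply] using this
      calc ‖θseq k i j - θstar i j‖ = Real.sqrt ((θseq k i j - θstar i j) ^ 2) := by
            rw [Real.sqrt_sq_eq_abs]; rfl
        _ ≤ frob (θseq k - θstar) := Real.sqrt_le_sqrt h1
    have h0 : Filter.Tendsto (fun k => θseq k i j - θstar i j) Filter.atTop (nhds 0) :=
      squeeze_zero_norm hb hθ
    have := h0.add_const (θstar i j)
    simpa using this
  -- rowDot convergence
  have hrow : ∀ j, Filter.Tendsto (fun k => rowDot x (θseq k) j) Filter.atTop
      (nhds (rowDot x θstar j)) := by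
    intro j
    unfold rowDot
    exact tendsto_finset_sum _ fun i _ => (hentry i j).const_mul (x i)
  -- vnorm convergence
  have hvn : Filter.Tendsto (fun k => vnorm (rowDot x (θseq k))) Filter.atTop
      (nhds (vnorm (rowDot x θstar))) := by
    unfold vnorm
    exact (Real.continuous_sqrt.tendsto _).comp
      (tendsto_finset_sum _ fun j _ => (hrow j).pow 2)
  -- sqrt term convergence
  have hsq : Filter.Tendsto (fun k => vnorm x * Real.sqrt (2 * G k / L)) Filter.atTop
      (nhds 0) := by
    have h1 : Filter.Tendsto (fun k => 2 * G k / L) Filter.atTop (nhds 0) := by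
      have := (hGten.const_mul 2).div_const L
      simpa using this
    have h2 : Filter.Tendsto (fun k => Real.sqrt (2 * G k / L)) Filter.atTop (nhds 0) := by
      have := (Real.continuous_sqrt.tendsto 0).comp h1
      simpa [Function.comp_def] using this
    have := h2.const_mul (vnorm x)
    simpa using this
  have htot : Filter.Tendsto
      (fun k => vnorm (rowDot x (θseq k)) + vnorm x * Real.sqrt (2 * G k / L))
      Filter.atTop (nhds (vnorm (rowDot x θstar))) := by
    have := hvn.add hsq
    simpa using this
  have hev : ∀ᶠ k in Filter.atTop,
      vnorm (rowDot x (θseq k)) + vnorm x * Real.sqrt (2 * G k / L) < thr :=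
    htot.eventually_lt_const hthr
  exact Filter.eventually_atTop.mp hev
end
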